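/- arXiv:2407.06732 — 3 statements merged into one kernel-verified Lean document; each statement's English description precedes it below -/
import Mathlib

section
/- Let Φ : A → B be a completely positive map between unital C*-algebras with B ⊆ B(H) concretely represented, and let K be a Hilbert space. Suppose Φ ⊗_M id : A ⊗_M B(K) → B ⊗_M B(K) is a bounded linear map satisfying E^z (Φ ⊗_M id)(T) E_w = Φ(E^z T E_w) for all T in the matrix space and z, w ∈ K. Then Φ ⊗_M id maps positive elements of A ⊗_M B(K) to positive elements of B(H ⊗ K). -/
/-!
Testing the slice identity against finite sums `x = ∑ᵢ uᵢ ⊗ zᵢ` gives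
`⟪x, (Φ ⊗ id)(T) x⟫ = ∑ᵢⱼ ⟪uᵢ, Φ(E^{zᵢ} T E_{zⱼ}) uⱼ⟫`. The operator matrix `[E^{zᵢ} T E_{zⱼ}]`
is positive because its quadratic form is that of `T` on `∑ᵢ vᵢ ⊗ zᵢ`, so complete positivity
of `Φ` makes the sum nonnegative. Such finite sums are dense in `H ⊗ K` and the quadratic form
is continuous, so `(Φ ⊗ id)(T)` is positive.
-/

open scoped ComplexOrder
open ContinuousLinearMap

theorem Submodule.exists_fin_sum_eq_of_mem_span_range_apply₂ {R M N P : Type*} [CommSemiring R]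
    [AddCommMonoid M] [Module R M] [AddCommMonoid N] [Module R N] [AddCommMonoid P] [Module R P]
    (f : M →ₗ[R] N →ₗ[R] P) {x : P}
    (hx : x ∈ Submodule.span R (Set.range fun p : M × N => f p.1 p.2)) :
    ∃ (n : ℕ) (u : Fin n → M) (z : Fin n → N), x = ∑ i, f (u i) (z i) := by
  obtain ⟨n, c, g, rfl⟩ := Submodule.mem_span_set'.mp hx
  choose p hp using fun i => (g i).2
  refine ⟨n, fun i => c i • (p i).1, fun i => (p i).2, Finset.sum_congr rfl fun i _ => ?_⟩
  rw [← hp i, map_smul, LinearMap.smul_apply]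

namespace ContinuousLinearMap

variable {E : Type*} [NormedAddCommGroup E] [InnerProductSpace ℂ E]

theorem isPositive_of_inner_nonneg {T : E →L[ℂ] E} (h : ∀ x, 0 ≤ inner ℂ x (T x)) :
    T.IsPositive := by
  have inner_apply_comm (x : E) : inner ℂ (T x) x = inner ℂ x (T x) :=
    (inner_conj_symm (𝕜 := ℂ) (T x) x).symm.trans (IsSelfAdjoint.of_nonneg (h x))
  refine (isPositive_iff T).mpr ⟨?_, fun x => inner_apply_comm x ▸ h x⟩
  refine (LinearMap.isSymmetric_iff_inner_map_self_real _).mpr fun x => ?_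
  rw [coe_coe, inner_apply_comm]
  exact IsSelfAdjoint.of_nonneg (h x)

theorem isPositive_of_inner_nonneg_of_dense {T : E →L[ℂ] E} {s : Set E} (hs : Dense s)
    (h : ∀ x ∈ s, 0 ≤ inner ℂ x (T x)) : T.IsPositive :=
  isPositive_of_inner_nonneg <|
    hs.induction h (isClosed_le continuous_const (continuous_id.inner T.continuous))

variable {H K : Type*} [NormedAddCommGroup H] [InnerProductSpace ℂ H] [CompleteSpace H]
  [NormedAddCommGroup K] [InnerProductSpace ℂ K] [CompleteSpace E]

theorem inner_sum_apply_sum_eq_sum_inner_compression {ι : Type*} [Fintype ι]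
    (tm : H →L[ℂ] K →L[ℂ] E) (S : E →L[ℂ] E) (u : ι → H) (z : ι → K) :
    inner ℂ (∑ i, tm (u i) (z i)) (S (∑ i, tm (u i) (z i))) =
      ∑ i, ∑ j, inner ℂ (u i) ((adjoint (tm.flip (z i)) ∘L S ∘L tm.flip (z j)) (u j)) := by
  rw [map_sum, sum_inner]
  refine Finset.sum_congr rfl fun i _ => ?_
  simp only [inner_sum, comp_apply, flip_apply, adjoint_inner_right]

end ContinuousLinearMap

theorem stmt6_general
    {H₀ H K H0K HK : Type*}
    [NormedAddCommGroup H₀] [InnerProductSpace ℂ H₀] [CompleteSpace H₀]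
    [NormedAddCommGroup H] [InnerProductSpace ℂ H] [CompleteSpace H]
    [NormedAddCommGroup K] [InnerProductSpace ℂ K]
    [NormedAddCommGroup H0K] [InnerProductSpace ℂ H0K] [CompleteSpace H0K]
    [NormedAddCommGroup HK] [InnerProductSpace ℂ HK] [CompleteSpace HK]
    (tm0 : H₀ →L[ℂ] K →L[ℂ] H0K)
    (tm : H →L[ℂ] K →L[ℂ] HK)
    (htot : Dense (Submodule.span ℂ
      (Set.range fun p : H × K => tm p.1 p.2) : Set HK))
    (A : StarSubalgebra ℂ (H₀ →L[ℂ] H₀))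
    (Φ : A →ₗ[ℂ] (H →L[ℂ] H))
    -- complete positivity of Φ
    (hcp : ∀ (n : ℕ) (M : Matrix (Fin n) (Fin n) A),
      (∀ v : Fin n → H₀,
        0 ≤ ∑ i, ∑ j, (inner ℂ (v i) ((M i j : H₀ →L[ℂ] H₀) (v j)) : ℂ)) →
      ∀ v : Fin n → H,
        0 ≤ ∑ i, ∑ j, (inner ℂ (v i) ((Φ (M i j)) (v j)) : ℂ))
    (Φlift : (H0K →L[ℂ] H0K) → (HK →L[ℂ] HK))
    -- the characteristic slice identity of the matrix-space lifting
    (hslice : ∀ (T : H0K →L[ℂ] H0K)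
      (hT : ∀ z w : K,
        (ContinuousLinearMap.adjoint (tm0.flip z)) ∘L T ∘L (tm0.flip w) ∈ A),
      ∀ z w : K,
        (ContinuousLinearMap.adjoint (tm.flip z)) ∘L (Φlift T) ∘L (tm.flip w)
          = (Φ ⟨(ContinuousLinearMap.adjoint (tm0.flip z)) ∘L T ∘L (tm0.flip w),
              hT z w⟩ : H →L[ℂ] H)) :
    ∀ (T : H0K →L[ℂ] H0K),
      (∀ z w : K,
        (ContinuousLinearMap.adjoint (tm0.flip z)) ∘L T ∘L (tm0.flip w) ∈ A) →
      T.IsPositive → (Φlift T).IsPositive := by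
  intro T hT hTpos
  refine isPositive_of_inner_nonneg_of_dense htot fun x hx => ?_
  obtain ⟨n, u, z, rfl⟩ :=
    Submodule.exists_fin_sum_eq_of_mem_span_range_apply₂ tm.toLinearMap₁₂ hx
  have hM : ∀ v : Fin n → H₀, 0 ≤ ∑ i, ∑ j, inner ℂ (v i)
      ((adjoint (tm0.flip (z i)) ∘L T ∘L tm0.flip (z j)) (v j)) := fun v =>
    inner_sum_apply_sum_eq_sum_inner_compression tm0 T v z ▸ hTpos.inner_nonneg_right _
  have hΦ := hcp n (fun i j => ⟨_, hT (z i) (z j)⟩) hM u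
  simp only [← hslice T hT] at hΦ
  simpa only [toLinearMap₁₂_apply_apply_apply, inner_sum_apply_sum_eq_sum_inner_compression]
    using hΦ

/-- Let `Φ : A → B(H)` be a completely positive map on a unital
C*-algebra `A ⊆ B(H₀)` and `K` a Hilbert space.  If `Φlift` is a (bounded,
linear on the matrix space) map satisfying the slice identity
`E^z Φlift(T) E_w = Φ(E^z T E_w)` for every `T ∈ A ⊗_M B(K)` and `z, w ∈ K`,
then `Φlift` maps positive elements of `A ⊗_M B(K)` to positive operators on
`H ⊗ K`.  Tensor products `H₀ ⊗ K` and `H ⊗ K` are modelled by `H0K`, `HK`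
via the maps `tm0`, `tm`. -/
theorem stmt6
    {H₀ H K H0K HK : Type*}
    [NormedAddCommGroup H₀] [InnerProductSpace ℂ H₀] [CompleteSpace H₀]
    [NormedAddCommGroup H] [InnerProductSpace ℂ H] [CompleteSpace H]
    [NormedAddCommGroup K] [InnerProductSpace ℂ K] [CompleteSpace K]
    [NormedAddCommGroup H0K] [InnerProductSpace ℂ H0K] [CompleteSpace H0K]
    [NormedAddCommGroup HK] [InnerProductSpace ℂ HK] [CompleteSpace HK]
    (tm0 : H₀ →L[ℂ] K →L[ℂ] H0K)
    (htm0 : ∀ (u v : H₀) (z w : K),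
      (inner ℂ (tm0 u z) (tm0 v w) : ℂ) = (inner ℂ u v : ℂ) * (inner ℂ z w : ℂ))
    (htot0 : Dense (Submodule.span ℂ
      (Set.range fun p : H₀ × K => tm0 p.1 p.2) : Set H0K))
    (tm : H →L[ℂ] K →L[ℂ] HK)
    (htm : ∀ (u v : H) (z w : K),
      (inner ℂ (tm u z) (tm v w) : ℂ) = (inner ℂ u v : ℂ) * (inner ℂ z w : ℂ))
    (htot : Dense (Submodule.span ℂ
      (Set.range fun p : H × K => tm p.1 p.2) : Set HK))
    (A : StarSubalgebra ℂ (H₀ →L[ℂ] H₀)) (hA : IsClosed (A : Set (H₀ →L[ℂ] H₀)))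
    (Φ : A →ₗ[ℂ] (H →L[ℂ] H))
    -- complete positivity of Φ
    (hcp : ∀ (n : ℕ) (M : Matrix (Fin n) (Fin n) A),
      (∀ v : Fin n → H₀,
        0 ≤ ∑ i, ∑ j, (inner ℂ (v i) ((M i j : H₀ →L[ℂ] H₀) (v j)) : ℂ)) →
      ∀ v : Fin n → H,
        0 ≤ ∑ i, ∑ j, (inner ℂ (v i) ((Φ (M i j)) (v j)) : ℂ))
    (Φlift : (H0K →L[ℂ] H0K) → (HK →L[ℂ] HK))
    -- boundedness and linearity of the lifting on the matrix space
    (hbdd : ∃ C : ℝ, ∀ T : H0K →L[ℂ] H0K,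
      (∀ z w : K,
        (ContinuousLinearMap.adjoint (tm0.flip z)) ∘L T ∘L (tm0.flip w) ∈ A) →
      ‖Φlift T‖ ≤ C * ‖T‖)
    (hadd : ∀ S T : H0K →L[ℂ] H0K,
      (∀ z w : K,
        (ContinuousLinearMap.adjoint (tm0.flip z)) ∘L S ∘L (tm0.flip w) ∈ A) →
      (∀ z w : K,
        (ContinuousLinearMap.adjoint (tm0.flip z)) ∘L T ∘L (tm0.flip w) ∈ A) →
      Φlift (S + T) = Φlift S + Φlift T)
    (hsmul : ∀ (c : ℂ) (T : H0K →L[ℂ] H0K),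
      (∀ z w : K,
        (ContinuousLinearMap.adjoint (tm0.flip z)) ∘L T ∘L (tm0.flip w) ∈ A) →
      Φlift (c • T) = c • Φlift T)
    -- the characteristic slice identity of the matrix-space lifting
    (hslice : ∀ (T : H0K →L[ℂ] H0K)
      (hT : ∀ z w : K,
        (ContinuousLinearMap.adjoint (tm0.flip z)) ∘L T ∘L (tm0.flip w) ∈ A),
      ∀ z w : K,
        (ContinuousLinearMap.adjoint (tm.flip z)) ∘L (Φlift T) ∘L (tm.flip w)
          = (Φ ⟨(ContinuousLinearMap.adjoint (tm0.flip z)) ∘L T ∘L (tm0.flip w),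
              hT z w⟩ : H →L[ℂ] H)) :
    ∀ (T : H0K →L[ℂ] H0K),
      (∀ z w : K,
        (ContinuousLinearMap.adjoint (tm0.flip z)) ∘L T ∘L (tm0.flip w) ∈ A) →
      T.IsPositive → (Φlift T).IsPositive :=
  stmt6_general tm0 tm htot A Φ hcp Φlift hslice
end

section
/- Let φ : A → B be a *-homomorphism between C*-algebras A ⊆ B(H₁), B ⊆ B(H₂), let K be a Hilbert space with orthonormal basis {e_α}, and let S, T ∈ A ⊗_M B(K) with S ∈ R(A; K) (meaning E^z S ∈ A ⊗ bra(K), the norm closure of the algebraic row space, for all z ∈ K). Then S T ∈ A ⊗_M B(K) and (φ ⊗_M id)(S) (φ ⊗_M id)(T) = (φ ⊗_M id)(S T), where φ ⊗_M id denotes the matrix-space lifting determined by E^z (φ ⊗_M id)(X) E_w = φ(E^z X E_w). -/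
/-!
Write `E_z = tm.flip z : u ↦ u ⊗ z`, fix a Hilbert basis `(e_α)` of `K` and put
`P_F = ∑_{α ∈ F} E_{e_α} E^{e_α}` for finite `F`. These are orthogonal projections converging
strongly to the identity, and `E^z S P_F T E_w = ∑_{α ∈ F} (E^z S E_{e_α}) (E^{e_α} T E_w)` is a
finite sum of products of elements of `A`. Right multiplication by the uniformly bounded `P_F`
converges in norm on the generators `a E^w` of the row space (as `P_F E_w = E_{w_F}`, with `w_F`
the partial basis expansion of `w`), hence on its closure, which contains `E^z S`; so these sums
converge in norm to `E^z S T E_w`, which lies in the closed algebra `A`. Applying the continuous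
*-homomorphism `φ` to the sums gives `E^z (φ ⊗ id)(S) P_F (φ ⊗ id)(T) E_w`, which converges
strongly to `E^z (φ ⊗ id)(S) (φ ⊗ id)(T) E_w`. Comparing limits identifies the slices of both
sides, and an operator on `H₂ ⊗ K` is determined by its slices.
-/

open ContinuousLinearMap Filter Topology

theorem tendsto_self_of_mem_closure_span {ι 𝕜 E : Type*} [NontriviallyNormedField 𝕜]
    [NormedAddCommGroup E] [NormedSpace 𝕜 E] {l : Filter ι} {P : ι → E →L[𝕜] E} {C : NNReal}
    (hP : ∀ i, LipschitzWith C (P i)) {s : Set E} (hs : ∀ x ∈ s, Tendsto (P · x) l (𝓝 x))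
    {x : E} (hx : x ∈ closure (Submodule.span 𝕜 s : Set E)) : Tendsto (P · x) l (𝓝 x) := by
  have hclosed : IsClosed {x | Tendsto (P · x) l (𝓝 x)} :=
    (LipschitzWith.uniformEquicontinuous _ C hP).equicontinuous.isClosed_setOfPred_tendsto
      continuous_id
  refine closure_minimal (fun y hy => ?_) hclosed hx
  induction hy using Submodule.span_induction with
  | mem y hy => exact hs y hy
  | zero => simpa only [Set.mem_ofPred_eq, map_zero] using tendsto_const_nhds
  | add y z _ _ hy hz => simpa only [Set.mem_ofPred_eq, map_add] using hy.add hz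
  | smul c y _ hy => simpa only [Set.mem_ofPred_eq, map_smul] using hy.const_smul c

noncomputable section TensorEmbedding

variable {H K HK : Type*}
  [NormedAddCommGroup H] [InnerProductSpace ℂ H] [CompleteSpace H]
  [NormedAddCommGroup K] [InnerProductSpace ℂ K]
  [NormedAddCommGroup HK] [InnerProductSpace ℂ HK] [CompleteSpace HK]
  (tm : H →L[ℂ] K →L[ℂ] HK)

def IsTensorEmbedding : Prop :=
  ∀ (u v : H) (z w : K), inner ℂ (tm u z) (tm v w) = inner ℂ u v * inner ℂ z w

def slice (z w : K) (X : HK →L[ℂ] HK) : H →L[ℂ] H :=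
  adjoint (tm.flip z) ∘L X ∘L tm.flip w

variable {ι : Type*} (b : HilbertBasis ι ℂ K)

def partialProj (F : Finset ι) : HK →L[ℂ] HK :=
  ∑ α ∈ F, tm.flip (b α) ∘L adjoint (tm.flip (b α))

variable {tm}

theorem IsTensorEmbedding.adjoint_flip_comp_flip (htm : IsTensorEmbedding tm) (z w : K) :
    adjoint (tm.flip z) ∘L tm.flip w = inner ℂ z w • ContinuousLinearMap.id ℂ H := by
  ext u
  refine ext_inner_right ℂ fun v => ?_
  simp only [comp_apply, adjoint_inner_left, flip_apply, htm u v w z, smul_apply, id_apply,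
    inner_smul_left, inner_conj_symm]
  ring

theorem IsTensorEmbedding.partialProj_comp_flip (htm : IsTensorEmbedding tm) (F : Finset ι)
    (x : K) : partialProj tm b F ∘L tm.flip x = tm.flip (∑ α ∈ F, b.repr x α • b α) := by
  simp only [partialProj, finsetSum_comp, comp_assoc, htm.adjoint_flip_comp_flip, comp_smul,
    comp_id, map_sum, map_smul, b.repr_apply_apply]

theorem IsTensorEmbedding.isStarProjection_partialProj (htm : IsTensorEmbedding tm)
    (F : Finset ι) : IsStarProjection (partialProj tm b F) := by
  classical
  constructor
  · have hfix : ∀ α ∈ F, ∑ β ∈ F, b.repr (b α) β • b β = b α := fun α hα => by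
      simp [b.repr_self, lp.single_apply, Pi.single_apply, hα]
    show partialProj tm b F ∘L partialProj tm b F = partialProj tm b F
    nth_rw 2 [partialProj]
    rw [comp_finsetSum]
    refine Finset.sum_congr rfl fun α hα => ?_
    rw [← comp_assoc, htm.partialProj_comp_flip, hfix α hα]
  · simp only [IsSelfAdjoint, partialProj, star_sum, star_eq_adjoint, adjoint_comp,
      adjoint_adjoint]

theorem IsTensorEmbedding.norm_partialProj_le (htm : IsTensorEmbedding tm) (F : Finset ι) :
    ‖partialProj tm b F‖ ≤ 1 :=
  (htm.isStarProjection_partialProj b F).norm_le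

theorem IsTensorEmbedding.tendsto_partialProj_comp_flip (htm : IsTensorEmbedding tm) (x : K) :
    Tendsto (fun F => partialProj tm b F ∘L tm.flip x) atTop (𝓝 (tm.flip x)) := by
  simp only [htm.partialProj_comp_flip, map_sum]
  exact (b.hasSum_repr x).mapL tm.flip

theorem IsTensorEmbedding.tendsto_partialProj_apply (htm : IsTensorEmbedding tm)
    (htot : Dense (Submodule.span ℂ (Set.range fun p : H × K => tm p.1 p.2) : Set HK)) (ξ : HK) :
    Tendsto (fun F => partialProj tm b F ξ) atTop (𝓝 ξ) := by
  refine tendsto_self_of_mem_closure_span (C := 1)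
    (fun F => (partialProj tm b F).lipschitz.weaken (htm.norm_partialProj_le b F)) ?_ (htot ξ)
  rintro _ ⟨⟨u, x⟩, rfl⟩
  exact ((apply ℂ HK u).continuous.tendsto _).comp (htm.tendsto_partialProj_comp_flip b x)

variable (tm) in
def rowSpace (A : Set (H →L[ℂ] H)) : Submodule ℂ (HK →L[ℂ] H) :=
  Submodule.span ℂ {R | ∃ a ∈ A, ∃ w : K, R = a ∘L adjoint (tm.flip w)}

theorem IsTensorEmbedding.tendsto_comp_partialProj (htm : IsTensorEmbedding tm)
    {A : Set (H →L[ℂ] H)} {R : HK →L[ℂ] H} (hR : R ∈ closure (rowSpace tm A : Set (HK →L[ℂ] H))) :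
    Tendsto (fun F => R ∘L partialProj tm b F) atTop (𝓝 R) := by
  refine tendsto_self_of_mem_closure_span (C := 1)
    (P := fun F => (compL ℂ HK HK H).flip (partialProj tm b F)) (fun F => ?_) ?_ hR
  · refine LipschitzWith.of_dist_le_mul fun R R' => ?_
    simp only [dist_eq_norm, flip_apply, compL_apply, ← sub_comp, NNReal.coe_one, one_mul]
    exact (opNorm_comp_le _ _).trans
      (mul_le_of_le_one_right (norm_nonneg _) (htm.norm_partialProj_le b F))
  · rintro _ ⟨a, -, w, rfl⟩
    have hP : ∀ F, adjoint (tm.flip w) ∘L partialProj tm b F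
        = adjoint (partialProj tm b F ∘L tm.flip w) := fun F => by
      rw [adjoint_comp, ← star_eq_adjoint, (htm.isStarProjection_partialProj b F).isSelfAdjoint]
    have hcont : Continuous fun E : H →L[ℂ] HK => a ∘L adjoint E :=
      (compL ℂ HK H H a).continuous.comp adjoint.continuous
    simpa only [Function.comp_def, flip_apply, compL_apply, comp_assoc, hP] using
      (hcont.tendsto _).comp (htm.tendsto_partialProj_comp_flip b w)

theorem sum_slice_comp_slice (X Y : HK →L[ℂ] HK) (z w : K) (F : Finset ι) :
    ∑ α ∈ F, slice tm z (b α) X ∘L slice tm (b α) w Y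
      = slice tm z w (X ∘L partialProj tm b F ∘L Y) := by
  simp only [slice, partialProj, comp_finsetSum, finsetSum_comp, comp_assoc]

theorem IsTensorEmbedding.tendsto_slice_comp_partialProj_comp (htm : IsTensorEmbedding tm)
    {A : Set (H →L[ℂ] H)} {X : HK →L[ℂ] HK} {z : K}
    (hX : adjoint (tm.flip z) ∘L X ∈ closure (rowSpace tm A : Set (HK →L[ℂ] H)))
    (Y : HK →L[ℂ] HK) (w : K) :
    Tendsto (fun F => slice tm z w (X ∘L partialProj tm b F ∘L Y)) atTop
      (𝓝 (slice tm z w (X ∘L Y))) := by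
  simpa only [Function.comp_def, slice, compL_apply, flip_apply, comp_assoc] using
    (((compL ℂ H HK H).flip (Y ∘L tm.flip w)).continuous.tendsto _).comp
      (htm.tendsto_comp_partialProj b hX)

theorem IsTensorEmbedding.tendsto_slice_comp_partialProj_comp_apply (htm : IsTensorEmbedding tm)
    (htot : Dense (Submodule.span ℂ (Set.range fun p : H × K => tm p.1 p.2) : Set HK))
    (X Y : HK →L[ℂ] HK) (z w : K) (v : H) :
    Tendsto (fun F => slice tm z w (X ∘L partialProj tm b F ∘L Y) v) atTop
      (𝓝 (slice tm z w (X ∘L Y) v)) :=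
  ((adjoint (tm.flip z) ∘L X).continuous.tendsto _).comp
    (htm.tendsto_partialProj_apply b htot _)

theorem eq_of_forall_adjoint_flip_apply_eq
    (htot : Dense (Submodule.span ℂ (Set.range fun p : H × K => tm p.1 p.2) : Set HK))
    {η η' : HK} (h : ∀ z, adjoint (tm.flip z) η = adjoint (tm.flip z) η') : η = η' := by
  refine innerSL_inj.mp (ext_on htot ?_)
  rintro _ ⟨⟨u, z⟩, rfl⟩
  simp only [innerSL_apply_apply, ← flip_apply tm, ← adjoint_inner_left, h]

theorem ext_of_slice_eq
    (htot : Dense (Submodule.span ℂ (Set.range fun p : H × K => tm p.1 p.2) : Set HK))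
    {X Y : HK →L[ℂ] HK} (h : ∀ z w, slice tm z w X = slice tm z w Y) : X = Y := by
  refine ext_on htot ?_
  rintro _ ⟨⟨u, w⟩, rfl⟩
  exact eq_of_forall_adjoint_flip_apply_eq htot fun z => congr($(h z w) u)

end TensorEmbedding

open scoped CStarAlgebra in
theorem stmt8_general
    {H₁ H₂ K H1K H2K : Type*}
    [NormedAddCommGroup H₁] [InnerProductSpace ℂ H₁] [CompleteSpace H₁]
    [NormedAddCommGroup H₂] [InnerProductSpace ℂ H₂] [CompleteSpace H₂]
    [NormedAddCommGroup K] [InnerProductSpace ℂ K] [CompleteSpace K]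
    [NormedAddCommGroup H1K] [InnerProductSpace ℂ H1K] [CompleteSpace H1K]
    [NormedAddCommGroup H2K] [InnerProductSpace ℂ H2K] [CompleteSpace H2K]
    (tm₁ : H₁ →L[ℂ] K →L[ℂ] H1K)
    (htm₁ : ∀ (u v : H₁) (z w : K),
      (inner ℂ (tm₁ u z) (tm₁ v w) : ℂ) = (inner ℂ u v : ℂ) * (inner ℂ z w : ℂ))
    (tm₂ : H₂ →L[ℂ] K →L[ℂ] H2K)
    (htm₂ : ∀ (u v : H₂) (z w : K),
      (inner ℂ (tm₂ u z) (tm₂ v w) : ℂ) = (inner ℂ u v : ℂ) * (inner ℂ z w : ℂ))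
    (htot₂ : Dense (Submodule.span ℂ
      (Set.range fun p : H₂ × K => tm₂ p.1 p.2) : Set H2K))
    (A : StarSubalgebra ℂ (H₁ →L[ℂ] H₁)) (hA : IsClosed (A : Set (H₁ →L[ℂ] H₁)))
    (φ : A →⋆ₐ[ℂ] (H₂ →L[ℂ] H₂))
    (S T : H1K →L[ℂ] H1K)
    (hS : ∀ z w : K,
      (ContinuousLinearMap.adjoint (tm₁.flip z)) ∘L S ∘L (tm₁.flip w) ∈ A)
    (hT : ∀ z w : K,
      (ContinuousLinearMap.adjoint (tm₁.flip z)) ∘L T ∘L (tm₁.flip w) ∈ A)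
    -- S belongs to the row space R(A; K)
    (hSrow : ∀ z : K,
      (ContinuousLinearMap.adjoint (tm₁.flip z)) ∘L S ∈
        closure (Submodule.span ℂ
          {R : H1K →L[ℂ] H₁ | ∃ a ∈ A, ∃ w : K,
            R = (a : H₁ →L[ℂ] H₁) ∘L (ContinuousLinearMap.adjoint (tm₁.flip w))} :
          Set (H1K →L[ℂ] H₁)))
    (φlift : (H1K →L[ℂ] H1K) → (H2K →L[ℂ] H2K))
    (hlift : ∀ (X : H1K →L[ℂ] H1K)
      (hX : ∀ z w : K,
        (ContinuousLinearMap.adjoint (tm₁.flip z)) ∘L X ∘L (tm₁.flip w) ∈ A),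
      ∀ z w : K,
        (ContinuousLinearMap.adjoint (tm₂.flip z)) ∘L (φlift X) ∘L (tm₂.flip w)
          = φ ⟨(ContinuousLinearMap.adjoint (tm₁.flip z)) ∘L X ∘L (tm₁.flip w),
              hX z w⟩) :
    (∀ z w : K,
        (ContinuousLinearMap.adjoint (tm₁.flip z)) ∘L (S ∘L T) ∘L (tm₁.flip w)
          ∈ A) ∧
      (φlift S) ∘L (φlift T) = φlift (S ∘L T) := by
  obtain ⟨ι, b, -⟩ := exists_hilbertBasis ℂ K
  have hslice : ∀ X (hX : ∀ z w, slice tm₁ z w X ∈ A) z w,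
      slice tm₂ z w (φlift X) = φ ⟨slice tm₁ z w X, hX z w⟩ := hlift
  let a : K → K → Finset ι → A := fun z w F =>
    ∑ α ∈ F, ⟨slice tm₁ z (b α) S, hS _ _⟩ * ⟨slice tm₁ (b α) w T, hT _ _⟩
  have ha : ∀ z w F, (a z w F : H₁ →L[ℂ] H₁) = slice tm₁ z w (S ∘L partialProj tm₁ b F ∘L T) :=
    fun z w F => by simp [a, mul_def, ← sum_slice_comp_slice]
  have hlim : ∀ z w, Tendsto (fun F => (a z w F : H₁ →L[ℂ] H₁)) atTop
      (𝓝 (slice tm₁ z w (S ∘L T))) := fun z w => by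
    simpa only [ha] using
      IsTensorEmbedding.tendsto_slice_comp_partialProj_comp b htm₁ (hSrow z) T w
  have hST : ∀ z w, slice tm₁ z w (S ∘L T) ∈ A := fun z w =>
    hA.mem_of_tendsto (hlim z w) (Eventually.of_forall fun F => (a z w F).2)
  refine ⟨hST, ext_of_slice_eq htot₂ fun z w => ?_⟩
  have hφa : ∀ F, φ (a z w F) = slice tm₂ z w (φlift S ∘L partialProj tm₂ b F ∘L φlift T) :=
    fun F => by simp [a, ← sum_slice_comp_slice, hslice S hS, hslice T hT, mul_def]
  -- `hA` makes `A` a C⋆-algebra, so that `φ` is continuous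
  have hφ : Tendsto (fun F => φ (a z w F)) atTop (𝓝 (φ ⟨_, hST z w⟩)) :=
    ((map_continuous φ).tendsto _).comp (tendsto_subtype_rng.2 (hlim z w))
  ext v
  refine tendsto_nhds_unique
    (IsTensorEmbedding.tendsto_slice_comp_partialProj_comp_apply b htm₂ htot₂ _ _ z w v) ?_
  rw [hslice (S ∘L T) hST z w]
  simpa only [Function.comp_def, apply_apply, hφa] using
    ((apply ℂ H₂ v).continuous.tendsto _).comp hφ

/-- Let `φ : A → B(H₂)` be a *-homomorphism on a C*-algebra
`A ⊆ B(H₁)`, `K` a Hilbert space, and `S, T ∈ A ⊗_M B(K)` with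
`S ∈ R(A; K)` (every slice `E^z S` lies in the norm closure of the algebraic
row space `A ⊗ ⟨K|`).  Then `S T ∈ A ⊗_M B(K)` and
`(φ ⊗_M id)(S) (φ ⊗_M id)(T) = (φ ⊗_M id)(S T)`, where the lifting is
characterised by its slices.  Tensor products `H₁ ⊗ K`, `H₂ ⊗ K` are
modelled by `H1K`, `H2K` via `tm₁`, `tm₂`. -/
theorem stmt8
    {H₁ H₂ K H1K H2K : Type*}
    [NormedAddCommGroup H₁] [InnerProductSpace ℂ H₁] [CompleteSpace H₁]
    [NormedAddCommGroup H₂] [InnerProductSpace ℂ H₂] [CompleteSpace H₂]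
    [NormedAddCommGroup K] [InnerProductSpace ℂ K] [CompleteSpace K]
    [NormedAddCommGroup H1K] [InnerProductSpace ℂ H1K] [CompleteSpace H1K]
    [NormedAddCommGroup H2K] [InnerProductSpace ℂ H2K] [CompleteSpace H2K]
    (tm₁ : H₁ →L[ℂ] K →L[ℂ] H1K)
    (htm₁ : ∀ (u v : H₁) (z w : K),
      (inner ℂ (tm₁ u z) (tm₁ v w) : ℂ) = (inner ℂ u v : ℂ) * (inner ℂ z w : ℂ))
    (htot₁ : Dense (Submodule.span ℂ
      (Set.range fun p : H₁ × K => tm₁ p.1 p.2) : Set H1K))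
    (tm₂ : H₂ →L[ℂ] K →L[ℂ] H2K)
    (htm₂ : ∀ (u v : H₂) (z w : K),
      (inner ℂ (tm₂ u z) (tm₂ v w) : ℂ) = (inner ℂ u v : ℂ) * (inner ℂ z w : ℂ))
    (htot₂ : Dense (Submodule.span ℂ
      (Set.range fun p : H₂ × K => tm₂ p.1 p.2) : Set H2K))
    (A : StarSubalgebra ℂ (H₁ →L[ℂ] H₁)) (hA : IsClosed (A : Set (H₁ →L[ℂ] H₁)))
    (φ : A →⋆ₐ[ℂ] (H₂ →L[ℂ] H₂))
    (S T : H1K →L[ℂ] H1K)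
    (hS : ∀ z w : K,
      (ContinuousLinearMap.adjoint (tm₁.flip z)) ∘L S ∘L (tm₁.flip w) ∈ A)
    (hT : ∀ z w : K,
      (ContinuousLinearMap.adjoint (tm₁.flip z)) ∘L T ∘L (tm₁.flip w) ∈ A)
    -- S belongs to the row space R(A; K)
    (hSrow : ∀ z : K,
      (ContinuousLinearMap.adjoint (tm₁.flip z)) ∘L S ∈
        closure (Submodule.span ℂ
          {R : H1K →L[ℂ] H₁ | ∃ a ∈ A, ∃ w : K,
            R = (a : H₁ →L[ℂ] H₁) ∘L (ContinuousLinearMap.adjoint (tm₁.flip w))} :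
          Set (H1K →L[ℂ] H₁)))
    (φlift : (H1K →L[ℂ] H1K) → (H2K →L[ℂ] H2K))
    (hlift : ∀ (X : H1K →L[ℂ] H1K)
      (hX : ∀ z w : K,
        (ContinuousLinearMap.adjoint (tm₁.flip z)) ∘L X ∘L (tm₁.flip w) ∈ A),
      ∀ z w : K,
        (ContinuousLinearMap.adjoint (tm₂.flip z)) ∘L (φlift X) ∘L (tm₂.flip w)
          = φ ⟨(ContinuousLinearMap.adjoint (tm₁.flip z)) ∘L X ∘L (tm₁.flip w),
              hX z w⟩) :
    (∀ z w : K,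
        (ContinuousLinearMap.adjoint (tm₁.flip z)) ∘L (S ∘L T) ∘L (tm₁.flip w)
          ∈ A) ∧
      (φlift S) ∘L (φlift T) = φlift (S ∘L T) :=
  stmt8_general tm₁ htm₁ tm₂ htm₂ htot₂ A hA φ S T hS hT hSrow φlift hlift
end

section
/- Let (T_t)_{t≥0} be a C₀-semigroup on a Banach space X with generator τ, let k : [0,∞) → B(X, Z) (Z a Banach space) be a family of bounded operators, locally uniformly bounded in norm, such that t ↦ k_t(x) is weakly continuous for each x ∈ X and ⟨φ, k_t(y)⟩ − ⟨φ, k_s(y)⟩ = ∫_s^t ⟨φ, k_r(τ(y))⟩ dr for all y ∈ dom τ, 0 ≤ s ≤ t, and φ ∈ Z*. Then k_t(y) = k_s(T_{t−s}(y)) for all y ∈ X and 0 ≤ s ≤ t. -/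
open Set Filter Topology MeasureTheory intervalIntegral


/-- Let `(T_t)` be a C₀-semigroup on a Banach space `X` with
generator `τ` (with domain `D`, invariant under the semigroup), and let
`k : [0, ∞) → B(X, Z)` be locally uniformly bounded in norm, weakly
continuous in `t` for each fixed vector, and satisfying
`⟨φ, k_t y⟩ − ⟨φ, k_s y⟩ = ∫_s^t ⟨φ, k_r (τ y)⟩ dr` for all `y ∈ D`,
`0 ≤ s ≤ t` and `φ ∈ Z*`.  Then `k_t y = k_s (T_{t−s} y)` for all `y ∈ X`
and `0 ≤ s ≤ t`. -/
theorem stmt19 {X Z : Type*}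
    [NormedAddCommGroup X] [NormedSpace ℂ X] [CompleteSpace X]
    [NormedAddCommGroup Z] [NormedSpace ℂ Z] [CompleteSpace Z]
    (T : ℝ → X →L[ℂ] X) (D : Set X) (τ : X → X) (k : ℝ → X →L[ℂ] Z)
    (hT0 : T 0 = ContinuousLinearMap.id ℂ X)
    (hTadd : ∀ s t : ℝ, 0 ≤ s → 0 ≤ t → T (s + t) = (T s).comp (T t))
    (hTcont : ∀ x : X, ContinuousOn (fun t => T t x) (Set.Ici (0 : ℝ)))
    (hdense : Dense D)
    (hD : ∀ y ∈ D, Filter.Tendsto (fun h : ℝ => h⁻¹ • (T h y - y))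
      (nhdsWithin 0 (Set.Ioi 0)) (nhds (τ y)))
    (hDmax : ∀ y : X, y ∉ D →
      ¬ ∃ L : X, Filter.Tendsto (fun h : ℝ => h⁻¹ • (T h y - y))
        (nhdsWithin 0 (Set.Ioi 0)) (nhds L))
    (hinv : ∀ t : ℝ, 0 ≤ t → ∀ y ∈ D, T t y ∈ D)
    (hkbdd : ∀ b : ℝ, ∃ C : ℝ, ∀ t ∈ Set.Icc (0 : ℝ) b, ‖k t‖ ≤ C)
    (hkweak : ∀ (x : X) (φ : Z →L[ℂ] ℂ),
      ContinuousOn (fun t => φ (k t x)) (Set.Ici (0 : ℝ)))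
    (hint : ∀ y ∈ D, ∀ (φ : Z →L[ℂ] ℂ), ∀ s t : ℝ, 0 ≤ s → s ≤ t →
      φ (k t y) - φ (k s y) = ∫ r in s..t, φ (k r (τ y))) :
    ∀ (y : X) (s t : ℝ), 0 ≤ s → s ≤ t → k t y = k s (T (t - s) y) := by
  -- semigroup operators commute
  have hTT : ∀ u h : ℝ, 0 ≤ u → 0 ≤ h → ∀ x : X, T h (T u x) = T u (T h x) := by
    intro u h hu hh x
    have h1 := hTadd h u hh hu
    have h2 := hTadd u h hu hh
    rw [add_comm] at h1
    have h3 : (T u).comp (T h) = (T h).comp (T u) := h2.symm.trans h1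
    exact (congrArg (fun (f : X →L[ℂ] X) => f x) h3).symm
  -- generator commutes with the semigroup on D
  have hcomm : ∀ y ∈ D, ∀ u : ℝ, 0 ≤ u → τ (T u y) = T u (τ y) := by
    intro y hy u hu
    refine tendsto_nhds_unique (hD _ (hinv u hu y hy)) ?_
    have h1 : Tendsto (fun h : ℝ => (T u) (h⁻¹ • (T h y - y))) (𝓝[>] 0)
        (𝓝 (T u (τ y))) := ((T u).continuous.tendsto _).comp (hD y hy)
    refine h1.congr' ?_
    filter_upwards [self_mem_nhdsWithin] with h hh
    rw [(T u).map_smul_of_tower, map_sub, hTT u h hu (le_of_lt hh)]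
  -- main statement on D
  suffices H : ∀ y ∈ D, ∀ s t : ℝ, 0 ≤ s → s ≤ t → k t y = k s (T (t - s) y) by
    intro y s t hs hst
    have hfg : (fun x => k t x) = fun x => k s (T (t - s) x) := by
      refine Continuous.ext_on hdense (k t).continuous
        ((k s).continuous.comp (T (t - s)).continuous) ?_
      intro x hx
      exact H x hx s t hs hst
    exact congrFun hfg y
  intro y hy s t hs hst
  have ht0 : (0 : ℝ) ≤ t := hs.trans hst
  rw [NormedSpace.eq_iff_forall_dual_eq ℂ]
  intro φ
  -- bound on k on [0, t]
  obtain ⟨C, hC⟩ := hkbdd t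
  -- bound on T on [0, t]
  obtain ⟨M, hM⟩ : ∃ M : ℝ, ∀ u ∈ Icc (0:ℝ) t, ‖T u‖ ≤ M := by
    have hb : ∀ x : X, ∃ B : ℝ, ∀ u : Icc (0:ℝ) t, ‖T u x‖ ≤ B := by
      intro x
      obtain ⟨B, hB⟩ := isCompact_Icc.exists_bound_of_continuousOn
        ((hTcont x).mono (Icc_subset_Ici_self))
      exact ⟨B, fun i => hB i i.2⟩
    obtain ⟨M, hM⟩ := banach_steinhaus (g := fun u : Icc (0:ℝ) t => T u) hb
    exact ⟨M, fun u hu => hM ⟨u, hu⟩⟩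
  -- continuity of r ↦ T (t - r) x on Iic t
  have hTc2 : ∀ x : X, ContinuousOn (fun r : ℝ => T (t - r) x) (Iic t) := by
    intro x
    refine (hTcont x).comp (continuous_const.sub continuous_id).continuousOn ?_
    intro r hr
    simpa using sub_nonneg.2 (mem_Iic.1 hr)
  -- interval integrability
  have hki : ∀ (x : X) (a b : ℝ), 0 ≤ a → 0 ≤ b →
      IntervalIntegrable (fun u => φ (k u x)) volume a b := by
    intro x a b ha hb
    refine ((hkweak x φ).mono ?_).intervalIntegrable
    intro u hu
    exact mem_Ici.2 ((le_min ha hb).trans hu.1)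
  set f : ℝ → ℂ := fun r => φ (k r (T (t - r) y)) with hf
  have hfc : ContinuousOn f (Icc s t) := by
    intro r₀ hr₀
    have hΔ : Tendsto (fun r => T (t - r) y - T (t - r₀) y) (𝓝[Icc s t] r₀) (𝓝 0) := by
      have h1 : Tendsto (fun r => T (t - r) y) (𝓝[Icc s t] r₀) (𝓝 (T (t - r₀) y)) :=
        ((hTc2 y) r₀ (mem_Iic.2 hr₀.2)).mono_left
          (nhdsWithin_mono _ (fun r hr => mem_Iic.2 hr.2))
      rw [← tendsto_sub_nhds_zero_iff] at h1
      exact h1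
    have term1 : Tendsto (fun r => φ (k r (T (t - r) y - T (t - r₀) y)))
        (𝓝[Icc s t] r₀) (𝓝 0) := by
      apply squeeze_zero_norm'
      · filter_upwards [self_mem_nhdsWithin] with r hr
        have hr0 : 0 ≤ r := hs.trans hr.1
        calc ‖φ (k r (T (t - r) y - T (t - r₀) y))‖
            ≤ ‖φ‖ * ‖k r (T (t - r) y - T (t - r₀) y)‖ := φ.le_opNorm _
          _ ≤ ‖φ‖ * (‖k r‖ * ‖T (t - r) y - T (t - r₀) y‖) := by
              gcongr; exact (k r).le_opNorm _
          _ ≤ ‖φ‖ * (C * ‖T (t - r) y - T (t - r₀) y‖) := by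
              gcongr; exact hC r ⟨hr0, hr.2⟩
          _ = (‖φ‖ * C) * ‖T (t - r) y - T (t - r₀) y‖ := by ring
      · simpa using (hΔ.norm.const_mul (‖φ‖ * C))
    have term2 : Tendsto (fun r => φ (k r (T (t - r₀) y))) (𝓝[Icc s t] r₀)
        (𝓝 (φ (k r₀ (T (t - r₀) y)))) :=
      ((hkweak (T (t - r₀) y) φ) r₀ (mem_Ici.2 (hs.trans hr₀.1))).mono_left
        (nhdsWithin_mono _ (fun r hr => mem_Ici.2 (hs.trans hr.1)))
    have := term1.add term2
    rw [zero_add] at this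
    refine this.congr (fun r => ?_)
    rw [map_sub, map_sub, sub_add_cancel]
  have hfd : ∀ r₀ ∈ Ico s t, HasDerivWithinAt f 0 (Ici r₀) r₀ := by
    intro r₀ hr₀
    have hr₀0 : 0 ≤ r₀ := hs.trans hr₀.1
    have hr₀t : r₀ < t := hr₀.2
    rw [hasDerivWithinAt_iff_tendsto_slope, Set.Ici_sdiff_left]
    have hIoo : Ioo r₀ t ∈ 𝓝[>] r₀ := Ioo_mem_nhdsGT_of_mem ⟨le_rfl, hr₀t⟩
    set L : ℂ := φ (k r₀ (T (t - r₀) (τ y))) with hLdef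
    have hsubmap : Tendsto (fun r : ℝ => r - r₀) (𝓝[>] r₀) (𝓝[>] 0) := by
      apply tendsto_nhdsWithin_of_tendsto_nhds_of_eventually_within
      · have hc : Tendsto (fun r : ℝ => r - r₀) (𝓝 r₀) (𝓝 0) := by
          simpa using (continuous_sub_right r₀).tendsto r₀
        exact hc.mono_left nhdsWithin_le_nhds
      · filter_upwards [self_mem_nhdsWithin] with r hr
        exact mem_Ioi.2 (sub_pos.2 hr)
    have hTright : ∀ x : X, Tendsto (fun r => T (t - r) x) (𝓝[>] r₀)
        (𝓝 (T (t - r₀) x)) := by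
      intro x
      rw [← nhdsWithin_Ioo_eq_nhdsGT hr₀t]
      exact ((hTc2 x) r₀ (mem_Iic.2 hr₀t.le)).mono_left
        (nhdsWithin_mono _ (fun r hr => mem_Iic.2 hr.2.le))
    have hΔτ : Tendsto (fun r => (‖φ‖ * C) * ‖T (t - r) (τ y) - T (t - r₀) (τ y)‖)
        (𝓝[>] r₀) (𝓝 0) := by
      have := (tendsto_sub_nhds_zero_iff.2 (hTright (τ y))).norm.const_mul (‖φ‖ * C)
      simpa using this
    -- (ii) : the B term
    have hDD : Tendsto (fun r : ℝ => (r - r₀)⁻¹ • (T (r - r₀) y - y)) (𝓝[>] r₀)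
        (𝓝 (τ y)) := (hD y hy).comp hsubmap
    have hX : Tendsto (fun r : ℝ => (r - r₀)⁻¹ • (T (t - r) y - T (t - r₀) y))
        (𝓝[>] r₀) (𝓝 (-(T (t - r₀) (τ y)))) := by
      have h1 : Tendsto (fun r : ℝ =>
          T (t - r) ((r - r₀)⁻¹ • (T (r - r₀) y - y) - τ y)) (𝓝[>] r₀) (𝓝 0) := by
        apply squeeze_zero_norm'
        · filter_upwards [hIoo] with r hr
          calc ‖T (t - r) ((r - r₀)⁻¹ • (T (r - r₀) y - y) - τ y)‖
              ≤ ‖T (t - r)‖ * ‖(r - r₀)⁻¹ • (T (r - r₀) y - y) - τ y‖ :=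
                (T (t - r)).le_opNorm _
            _ ≤ M * ‖(r - r₀)⁻¹ • (T (r - r₀) y - y) - τ y‖ := by
                gcongr
                exact hM (t - r) ⟨by linarith [hr.2], by linarith [hr.1, hr₀0]⟩
        · have := (tendsto_sub_nhds_zero_iff.2 hDD).norm.const_mul M
          simpa using this
      have h2 : Tendsto (fun r : ℝ => T (t - r) (τ y) - T (t - r₀) (τ y)) (𝓝[>] r₀)
          (𝓝 0) := tendsto_sub_nhds_zero_iff.2 (hTright (τ y))
      have h4 : Tendsto (fun r : ℝ => T (t - r) ((r - r₀)⁻¹ • (T (r - r₀) y - y)))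
          (𝓝[>] r₀) (𝓝 (T (t - r₀) (τ y))) := by
        have h3 := h1.add h2
        rw [zero_add] at h3
        have h5 : Tendsto (fun r : ℝ =>
            (T (t - r) ((r - r₀)⁻¹ • (T (r - r₀) y - y)) - T (t - r₀) (τ y))
            + T (t - r₀) (τ y)) (𝓝[>] r₀) (𝓝 (0 + T (t - r₀) (τ y))) := by
          refine Tendsto.add ?_ tendsto_const_nhds
          refine h3.congr (fun r => ?_)
          rw [map_sub]
          abel
        simpa using h5
      refine h4.neg.congr' ?_
      filter_upwards [hIoo] with r hr
      have hexp : T (t - r₀) y = T (t - r) (T (r - r₀) y) := by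
        have he : t - r₀ = (t - r) + (r - r₀) := by ring
        rw [he, hTadd (t - r) (r - r₀) (by linarith [hr.2]) (by linarith [hr.1])]
        rfl
      rw [hexp, (T (t - r)).map_smul_of_tower, map_sub, ← smul_neg, neg_sub]
    have hB : Tendsto (fun r => (r - r₀)⁻¹ • (φ (k r₀ (T (t - r) y))
        - φ (k r₀ (T (t - r₀) y)))) (𝓝[>] r₀) (𝓝 (-L)) := by
      have hcomp := ((φ.comp (k r₀)).continuous.tendsto _).comp hX
      refine Tendsto.congr (fun r => ?_) (by simpa using hcomp)
      simp only [ContinuousLinearMap.coe_comp', Function.comp_apply, map_sub,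
        ContinuousLinearMap.map_smul_of_tower]
    -- (i) : the A term
    have g2cont : ContinuousOn (fun u => φ (k u (T (t - r₀) (τ y)))) (Ici r₀) :=
      (hkweak (T (t - r₀) (τ y)) φ).mono (Ici_subset_Ici.2 hr₀0)
    have hFTC : HasDerivWithinAt (fun r => ∫ u in r₀..r, φ (k u (T (t - r₀) (τ y))))
        (φ (k r₀ (T (t - r₀) (τ y)))) (Ici r₀) r₀ :=
      intervalIntegral.integral_hasDerivWithinAt_right (IntervalIntegrable.refl)
        ⟨Ici r₀, mem_of_superset self_mem_nhdsWithin Ioi_subset_Ici_self,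
          g2cont.aestronglyMeasurable measurableSet_Ici⟩
        ((g2cont r₀ self_mem_Ici).mono Ioi_subset_Ici_self)
    have hA2 : Tendsto (fun r => (r - r₀)⁻¹ • ∫ u in r₀..r, φ (k u (T (t - r₀) (τ y))))
        (𝓝[>] r₀) (𝓝 L) := by
      have hsl := hasDerivWithinAt_iff_tendsto_slope.1 hFTC
      rw [Set.Ici_sdiff_left] at hsl
      refine Tendsto.congr (fun r => ?_) hsl
      rw [slope_def_module, intervalIntegral.integral_same, sub_zero]
    have hA1 : Tendsto (fun r => (r - r₀)⁻¹ • ∫ u in r₀..r,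
        (φ (k u (T (t - r) (τ y))) - φ (k u (T (t - r₀) (τ y))))) (𝓝[>] r₀) (𝓝 0) := by
      apply squeeze_zero_norm'
      · filter_upwards [hIoo] with r hr
        have hrr : r₀ ≤ r := hr.1.le
        have hb : ∀ u ∈ Set.uIoc r₀ r,
            ‖φ (k u (T (t - r) (τ y))) - φ (k u (T (t - r₀) (τ y)))‖
            ≤ (‖φ‖ * C) * ‖T (t - r) (τ y) - T (t - r₀) (τ y)‖ := by
          intro u hu
          rw [Set.uIoc_of_le hrr] at hu
          have hu0 : 0 ≤ u := hr₀0.trans hu.1.le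
          have hut : u ≤ t := hu.2.trans hr.2.le
          calc ‖φ (k u (T (t - r) (τ y))) - φ (k u (T (t - r₀) (τ y)))‖
              = ‖φ (k u (T (t - r) (τ y) - T (t - r₀) (τ y)))‖ := by
                rw [map_sub, map_sub]
            _ ≤ ‖φ‖ * ‖k u (T (t - r) (τ y) - T (t - r₀) (τ y))‖ := φ.le_opNorm _
            _ ≤ ‖φ‖ * (‖k u‖ * ‖T (t - r) (τ y) - T (t - r₀) (τ y)‖) := by
                gcongr; exact (k u).le_opNorm _
            _ ≤ ‖φ‖ * (C * ‖T (t - r) (τ y) - T (t - r₀) (τ y)‖) := by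
                gcongr; exact hC u ⟨hu0, hut⟩
            _ = (‖φ‖ * C) * ‖T (t - r) (τ y) - T (t - r₀) (τ y)‖ := by ring
        have hni := intervalIntegral.norm_integral_le_of_norm_le_const hb
        have habs : |r - r₀| ≠ 0 := by
          rw [abs_ne_zero]; exact sub_ne_zero.2 (ne_of_gt hr.1)
        calc ‖(r - r₀)⁻¹ • ∫ u in r₀..r,
              (φ (k u (T (t - r) (τ y))) - φ (k u (T (t - r₀) (τ y))))‖
            = |r - r₀|⁻¹ * ‖∫ u in r₀..r,
              (φ (k u (T (t - r) (τ y))) - φ (k u (T (t - r₀) (τ y))))‖ := by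
              rw [norm_smul, norm_inv, Real.norm_eq_abs]
          _ ≤ |r - r₀|⁻¹ * ((‖φ‖ * C) * ‖T (t - r) (τ y) - T (t - r₀) (τ y)‖
              * |r - r₀|) := by gcongr
          _ = (‖φ‖ * C) * ‖T (t - r) (τ y) - T (t - r₀) (τ y)‖ := by
              field_simp
      · exact hΔτ
    have hA : Tendsto (fun r => (r - r₀)⁻¹ • (φ (k r (T (t - r) y))
        - φ (k r₀ (T (t - r) y)))) (𝓝[>] r₀) (𝓝 L) := by
      have hsum := hA1.add hA2
      rw [zero_add] at hsum
      refine hsum.congr' ?_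
      filter_upwards [hIoo] with r hr
      have hw : T (t - r) y ∈ D := hinv (t - r) (by linarith [hr.2]) y hy
      have hi1 : IntervalIntegrable (fun u => φ (k u (T (t - r) (τ y)))) volume r₀ r :=
        hki _ r₀ r hr₀0 (hr₀0.trans hr.1.le)
      have hi2 : IntervalIntegrable (fun u => φ (k u (T (t - r₀) (τ y)))) volume r₀ r :=
        hki _ r₀ r hr₀0 (hr₀0.trans hr.1.le)
      have hint' := hint (T (t - r) y) hw φ r₀ r hr₀0 hr.1.le
      rw [hcomm y hy (t - r) (by linarith [hr.2])] at hint'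
      rw [intervalIntegral.integral_sub hi1 hi2, ← smul_add, sub_add_cancel, ← hint']
    have hfin := hA.add hB
    rw [add_neg_cancel] at hfin
    refine Tendsto.congr (fun r => ?_) hfin
    rw [slope_def_module]
    show (r - r₀)⁻¹ • (φ (k r (T (t - r) y)) - φ (k r₀ (T (t - r) y)))
        + (r - r₀)⁻¹ • (φ (k r₀ (T (t - r) y)) - φ (k r₀ (T (t - r₀) y)))
        = (r - r₀)⁻¹ • (f r - f r₀)
    rw [← smul_add, sub_add_sub_cancel]
  have hconst := constant_of_has_deriv_right_zero hfc hfd t ⟨hst, le_rfl⟩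
  have h1 : f t = φ (k t y) := by simp [hf, hT0]
  have h2 : f s = φ (k s (T (t - s) y)) := rfl
  rw [← h1, ← h2, hconst]
end
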